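/- Let K ⊆ ℝ³ be a compact convex set with nonempty interior which is strictly convex and has smooth boundary in the sense that for every p ∈ frontier K there is exactly one unit vector u ∈ ℝ³ with ⟪y − p, u⟫ ≤ 0 for all y ∈ K. Assume K ⊆ {x ∈ ℝ³ : x₃ ≤ 1} and K ∩ {x ∈ ℝ³ : x₃ = 1} = {N}, where N = (0,0,1). Define h : frontier K → OnePoint ℂ by h(N) = ∞ and, for p = (p₁,p₂,p₃) ∈ frontier K with p ≠ N, h(p) = (p₁ + i·p₂)/(1 − p₃). Then h is a homeomorphism from frontier K onto OnePoint ℂ. -/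

import Mathlib

/-!
Every ray from the north pole `N` pointing strictly below the plane `x₃ = 1` enters the
interior of `K`: otherwise a hyperplane separating the ray from `interior K` would yield a unit
outer normal at `N` other than `e₃`, contradicting smoothness. Such a ray also leaves the compact
set `K`, so it meets `∂K`, and by strict convexity it meets `∂K` only once. Since `h` is constant
exactly along these rays, `h` is a bijection. For continuity at `N`, compactness of the set of
directions pointing a fixed angle below the plane shows that `∂K` is tangent to `x₃ = 1` at `N`,
so `|h p| → ∞` as `p → N`. A continuous bijection from the compact space `∂K` onto the Hausdorff
space `OnePoint ℂ` is a homeomorphism.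
-/

open Set Filter Topology
open scoped RealInnerProductSpace

theorem IsPreconnected.inter_frontier_nonempty {X : Type*} [TopologicalSpace X] {s t : Set X}
    (hs : IsPreconnected s) (hin : (s ∩ interior t).Nonempty)
    (hout : (s \ closure t).Nonempty) : (s ∩ frontier t).Nonempty := by
  by_contra! hfr
  obtain ⟨x, -, hxi, hxc⟩ := hs _ _ isOpen_interior isClosed_closure.isOpen_compl
    (fun x hx => by_contra fun h => hfr.subset ⟨hx, not_not.1 (not_or.1 h).2, (not_or.1 h).1⟩)
    hin hout
  exact hxc (interior_subset_closure hxi)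

section Ray

variable {E : Type*} [NormedAddCommGroup E] [NormedSpace ℝ E] {K : Set E} {p v : E}

theorem exists_ge_add_smul_mem_frontier (hK : IsCompact K) (hv : v ≠ 0) {t₀ : ℝ}
    (h : p + t₀ • v ∈ interior K) : ∃ t ≥ t₀, p + t • v ∈ frontier K := by
  let g : ℝ → E := fun t => p + t • v
  have hg : IsClosedEmbedding g :=
    (Homeomorph.addLeft p).isClosedEmbedding.comp (isClosedEmbedding_smul_left hv)
  obtain ⟨t₁, ht₁, hout⟩ := ((eventually_ge_atTop t₀).and
    ((hg.tendsto_cocompact.mono_left atTop_le_cocompact).eventually hK.compl_mem_cocompact)).exists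
  obtain ⟨_, ⟨t, ht, rfl⟩, hfr⟩ :=
    (isPreconnected_Ici.image g hg.continuous.continuousOn).inter_frontier_nonempty
      ⟨g t₀, mem_image_of_mem g self_mem_Ici, h⟩
      ⟨g t₁, mem_image_of_mem g ht₁, by rwa [hK.isClosed.closure_eq]⟩
  exact ⟨t, ht, hfr⟩

theorem StrictConvex.le_of_add_smul_mem_frontier (hK : StrictConvex ℝ K) (hp : p ∈ K)
    (hv : v ≠ 0) {a b : ℝ} (ha : 0 < a) (hpa : p + a • v ∈ frontier K) (hpb : p + b • v ∈ K) :
    b ≤ a := by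
  by_contra! hab
  have hb : 0 < b := ha.trans hab
  have := hK.add_smul_mem hp hpb (smul_ne_zero hb.ne' hv) (div_pos ha hb) ((div_lt_one hb).2 hab)
  rw [smul_smul, div_mul_cancel₀ a hb.ne'] at this
  exact hpa.2 this

end Ray

section Normal

variable {E : Type*} [NormedAddCommGroup E] [InnerProductSpace ℝ E] {K : Set E} {p n v : E}

def IsUnitOuterNormal (K : Set E) (p u : E) : Prop :=
  ‖u‖ = 1 ∧ ∀ y ∈ K, ⟪y - p, u⟫ ≤ 0

theorem exists_isUnitOuterNormal_inner_nonneg [CompleteSpace E] (hK : Convex ℝ K)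
    (hint : (interior K).Nonempty) (hp : p ∈ frontier K)
    (hray : ∀ t > (0 : ℝ), p + t • v ∉ interior K) :
    ∃ u, IsUnitOuterNormal K p u ∧ 0 ≤ ⟪v, u⟫ := by
  let R := AffineMap.lineMap p (p + v) '' Ici (0 : ℝ)
  have hR : ∀ t : ℝ, 0 ≤ t → p + t • v ∈ R := fun t ht =>
    ⟨t, ht, by simp [AffineMap.lineMap_apply_module', add_comm]⟩
  have hdisj : Disjoint (interior K) R := by
    refine Set.disjoint_right.2 ?_
    rintro - ⟨t, ht, rfl⟩
    rw [AffineMap.lineMap_apply_module', add_sub_cancel_left, add_comm]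
    rcases (mem_Ici.1 ht).eq_or_lt with rfl | ht
    · simpa using hp.2
    · exact hray t ht
  obtain ⟨f, c, hfK, hfR⟩ :=
    geometric_hahn_banach_open hK.interior isOpen_interior ((convex_Ici 0).affine_image _) hdisj
  have hf_le : ∀ y ∈ closure K, f y ≤ c := by
    rw [← hK.closure_interior_eq_closure_of_nonempty_interior hint]
    exact fun y hy => closure_minimal (fun a ha => (hfK a ha).le)
      (isClosed_le f.continuous continuous_const) hy
  have hfp : f p = c := le_antisymm (hf_le p hp.1) (by simpa using hfR _ (hR 0 le_rfl))
  have hfv : 0 ≤ f v := by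
    have := hfR _ (hR 1 zero_le_one)
    rw [one_smul, map_add, hfp] at this
    linarith
  set w := (InnerProductSpace.toDual ℝ E).symm f
  have hw : ∀ x, ⟪w, x⟫ = f x := fun x => InnerProductSpace.toDual_symm_apply
  have hw0 : w ≠ 0 := by
    rintro hw0
    obtain ⟨a, ha⟩ := hint
    have := hfK a ha
    simp only [← hw, hw0, inner_zero_left] at this hfp
    linarith
  refine ⟨‖w‖⁻¹ • w, ⟨norm_smul_inv_norm hw0, fun y hy => ?_⟩, ?_⟩
  · rw [real_inner_smul_right, real_inner_comm, hw, map_sub, hfp]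
    exact mul_nonpos_of_nonneg_of_nonpos (by positivity)
      (by linarith [hf_le y (subset_closure hy)])
  · rw [real_inner_smul_right, real_inner_comm, hw]
    positivity

theorem exists_pos_add_smul_mem_interior [CompleteSpace E] (hK : Convex ℝ K)
    (hint : (interior K).Nonempty) (hp : p ∈ frontier K)
    (hn : ∀ u, IsUnitOuterNormal K p u → u = n) (hv : ⟪v, n⟫ < 0) :
    ∃ t > (0 : ℝ), p + t • v ∈ interior K := by
  by_contra! hray
  obtain ⟨u, hu, hvu⟩ := exists_isUnitOuterNormal_inner_nonneg hK hint hp hray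
  rw [hn u hu] at hvu
  exact hvu.not_gt hv

theorem disjoint_nhds_map_normalize (hK : Convex ℝ K) (hp : p ∈ closure K) {t : ℝ} (ht : 0 < t)
    {w : E} (hw : p + t • w ∈ interior K) :
    Disjoint (𝓝 w) (map (fun q => ‖q - p‖⁻¹ • (q - p)) (𝓝[frontier K \ {p}] p)) := by
  let V := {w' : E | p + t • w' ∈ interior K}
  have hV : V ∈ 𝓝 w := (isOpen_interior.preimage (by fun_prop)).mem_nhds hw
  refine disjoint_of_disjoint_of_mem disjoint_compl_right hV (mem_map.2 ?_)
  filter_upwards [self_mem_nhdsWithin, nhdsWithin_le_nhds (Metric.ball_mem_nhds p ht)]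
    with q ⟨hq, hqp⟩ hqt hqV
  have hpos : 0 < ‖q - p‖ := norm_pos_iff.2 (sub_ne_zero.2 hqp)
  have hq_eq : p + (‖q - p‖ / t) • (t • ‖q - p‖⁻¹ • (q - p)) = q := by
    rw [smul_smul, smul_smul, div_mul_cancel₀ _ ht.ne', mul_inv_cancel₀ hpos.ne', one_smul,
      add_sub_cancel]
  refine hq.2 (hq_eq ▸ hK.add_smul_mem_interior' hp hqV ⟨div_pos hpos ht, ?_⟩)
  exact (div_le_one ht).2 (mem_ball_iff_norm.1 hqt).le

theorem eventually_neg_mul_norm_lt_inner_sub [FiniteDimensional ℝ E] (hK : Convex ℝ K)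
    (hint : (interior K).Nonempty) (hp : p ∈ frontier K)
    (hn : ∀ u, IsUnitOuterNormal K p u → u = n) {c : ℝ} (hc : 0 < c) :
    ∀ᶠ q in 𝓝[frontier K \ {p}] p, -(c * ‖q - p‖) < ⟪q - p, n⟫ := by
  have := FiniteDimensional.complete ℝ E
  let S := Metric.sphere (0 : E) 1 ∩ {w | ⟪w, n⟫ ≤ -c}
  have hS : IsCompact S := (isCompact_sphere 0 1).inter_right
    (isClosed_le (continuous_id.inner continuous_const) continuous_const)
  have hnotS : Sᶜ ∈ map (fun q => ‖q - p‖⁻¹ • (q - p)) (𝓝[frontier K \ {p}] p) := by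
    refine disjoint_principal_left.1 (Disjoint.mono_left principal_le_nhdsSet
      (hS.disjoint_nhdsSet_left.2 fun w hw => ?_))
    obtain ⟨t, ht, hwt⟩ :=
      exists_pos_add_smul_mem_interior hK hint hp hn (hw.2.trans_lt (neg_lt_zero.2 hc))
    exact disjoint_nhds_map_normalize hK hp.1 ht hwt
  filter_upwards [hnotS, self_mem_nhdsWithin] with q hqS ⟨_, hqp⟩
  have hpos : 0 < ‖q - p‖ := norm_pos_iff.2 (sub_ne_zero.2 hqp)
  have hlt : -c < ‖q - p‖⁻¹ * ⟪q - p, n⟫ := by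
    rw [← real_inner_smul_left]
    refine not_le.1 fun h => hqS ⟨?_, h⟩
    rw [mem_sphere_zero_iff_norm, norm_smul, norm_inv, norm_norm, inv_mul_cancel₀ hpos.ne']
  rw [lt_inv_mul_iff₀ hpos] at hlt
  linarith

end Normal

noncomputable section

def north : EuclideanSpace ℝ (Fin 3) := EuclideanSpace.single 2 1

def stereoCoord (q : EuclideanSpace ℝ (Fin 3)) : ℂ :=
  ((q 0 : ℂ) + (q 1 : ℂ) * Complex.I) / ((1 : ℂ) - (q 2 : ℂ))

/-- The ray from `north` in direction `stereoDir z` meets the plane `x₃ = 0` at `z`. -/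
def stereoDir (z : ℂ) : EuclideanSpace ℝ (Fin 3) := !₂[z.re, z.im, -1]

def stereoProj (q : EuclideanSpace ℝ (Fin 3)) : OnePoint ℂ :=
  if q = north then OnePoint.infty else stereoCoord q

end

@[simp] theorem north_apply_zero : north 0 = 0 := by simp [north]
@[simp] theorem north_apply_one : north 1 = 0 := by simp [north]
@[simp] theorem north_apply_two : north 2 = 1 := by simp [north]
@[simp] theorem stereoDir_apply_zero (z : ℂ) : stereoDir z 0 = z.re := rfl
@[simp] theorem stereoDir_apply_one (z : ℂ) : stereoDir z 1 = z.im := rfl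
@[simp] theorem stereoDir_apply_two (z : ℂ) : stereoDir z 2 = -1 := rfl

theorem stereoDir_ne_zero (z : ℂ) : stereoDir z ≠ 0 := fun h => by
  simpa using congrArg (· 2) h

theorem inner_north_right (q : EuclideanSpace ℝ (Fin 3)) : ⟪q, north⟫ = q 2 := by
  simp [north, EuclideanSpace.inner_single_right]

theorem north_add_smul_stereoDir_apply_two (z : ℂ) (t : ℝ) :
    (north + t • stereoDir z) 2 = 1 - t := by
  simp [sub_eq_add_neg]

theorem stereoCoord_north_add_smul (z : ℂ) {t : ℝ} (ht : t ≠ 0) :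
    stereoCoord (north + t • stereoDir z) = z := by
  have ht' : (t : ℂ) ≠ 0 := Complex.ofReal_ne_zero.2 ht
  simp only [stereoCoord, PiLp.add_apply, PiLp.smul_apply, smul_eq_mul, north_apply_zero,
    north_apply_one, north_apply_two, stereoDir_apply_zero, stereoDir_apply_one,
    stereoDir_apply_two]
  push_cast
  rw [div_eq_iff (by simpa using ht')]
  apply Complex.ext <;> simp [mul_comm]

theorem north_add_smul_stereoDir_stereoCoord {q : EuclideanSpace ℝ (Fin 3)} (hq : q 2 ≠ 1) :
    north + (1 - q 2) • stereoDir (stereoCoord q) = q := by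
  have hq' : (1 : ℂ) - (q 2 : ℂ) = ((1 - q 2 : ℝ) : ℂ) := by push_cast; ring
  have hne : (1 - q 2 : ℝ) ≠ 0 := sub_ne_zero.2 hq.symm
  have hre : (stereoCoord q).re = q 0 / (1 - q 2) := by
    rw [stereoCoord, hq', Complex.div_ofReal_re]; simp
  have him : (stereoCoord q).im = q 1 / (1 - q 2) := by
    rw [stereoCoord, hq', Complex.div_ofReal_im]; simp
  ext i
  fin_cases i
  · simp [hre, mul_div_cancel₀ _ hne]
  · simp [him, mul_div_cancel₀ _ hne]
  · simp

theorem norm_stereoDir_le (z : ℂ) : ‖stereoDir z‖ ≤ ‖z‖ + 1 := by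
  rw [EuclideanSpace.norm_eq, Real.sqrt_le_iff, Fin.sum_univ_three]
  refine ⟨by positivity, ?_⟩
  have hz : ‖z‖ ^ 2 = z.re ^ 2 + z.im ^ 2 := by
    rw [Complex.sq_norm, Complex.normSq_apply]; ring
  simp only [stereoDir_apply_zero, stereoDir_apply_one, stereoDir_apply_two, Real.norm_eq_abs,
    sq_abs]
  nlinarith [norm_nonneg z]

theorem norm_sub_north_le {q : EuclideanSpace ℝ (Fin 3)} (hq : q 2 < 1) :
    ‖q - north‖ ≤ (1 - q 2) * (‖stereoCoord q‖ + 1) := by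
  conv_lhs => rw [← north_add_smul_stereoDir_stereoCoord hq.ne, add_sub_cancel_left]
  rw [norm_smul, Real.norm_of_nonneg (by linarith)]
  exact mul_le_mul_of_nonneg_left (norm_stereoDir_le _) (by linarith)

theorem continuousAt_stereoCoord {q : EuclideanSpace ℝ (Fin 3)} (hq : q 2 ≠ 1) :
    ContinuousAt stereoCoord q := by
  refine ContinuousAt.div (by fun_prop) (by fun_prop) (sub_ne_zero.2 ?_)
  exact_mod_cast hq.symm

theorem tendsto_norm_stereoCoord_atTop {ι : Type*} {l : Filter ι}
    {q : ι → EuclideanSpace ℝ (Fin 3)} (hlt : ∀ᶠ i in l, q i 2 < 1)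
    (hflat : ∀ c > 0, ∀ᶠ i in l, 1 - q i 2 < c * ‖q i - north‖) :
    Tendsto (fun i => ‖stereoCoord (q i)‖) l atTop := by
  refine tendsto_atTop.2 fun b => ?_
  filter_upwards [hlt, hflat (|b| + 1)⁻¹ (by positivity)] with i hi hflat
  rw [inv_mul_eq_div, lt_div_iff₀ (by positivity)] at hflat
  have := lt_of_mul_lt_mul_left (hflat.trans_le (norm_sub_north_le hi)) (by linarith)
  linarith [le_abs_self b]

section ConvexBody

variable {K : Set (EuclideanSpace ℝ (Fin 3))}

theorem north_mem_frontier (hN : north ∈ K) (hK : ∀ x ∈ K, x 2 ≤ 1) : north ∈ frontier K := by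
  refine ⟨subset_closure hN, fun hint => ?_⟩
  have hmax : IsLocalMax (EuclideanSpace.proj 2 : EuclideanSpace ℝ (Fin 3) →L[ℝ] ℝ) north :=
    IsMaxOn.isLocalMax (fun x hx => by simpa using hK x hx) (mem_interior_iff_mem_nhds.1 hint)
  simpa using congrArg (· north) (hmax.hasFDerivAt_eq_zero (ContinuousLinearMap.hasFDerivAt _))

theorem isUnitOuterNormal_north (hK : ∀ x ∈ K, x 2 ≤ 1) : IsUnitOuterNormal K north north :=
  ⟨by simp [north], fun y hy => by
    rw [inner_sub_left, inner_north_right, inner_north_right, north_apply_two]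
    linarith [hK y hy]⟩

theorem injOn_stereoProj (hKs : StrictConvex ℝ K) (hKc : IsClosed K) (hN : north ∈ K)
    (hlt : ∀ x ∈ K, x ≠ north → x 2 < 1) : InjOn stereoProj (frontier K) := by
  have hlt' : ∀ p ∈ frontier K, p ≠ north → p 2 < 1 := fun p hp => hlt p (hKc.frontier_subset hp)
  have hfar : ∀ p ∈ frontier K, ∀ q ∈ frontier K, p ≠ north → q ≠ north →
      stereoCoord p = stereoCoord q → 1 - q 2 ≤ 1 - p 2 := by
    intro p hp q hq hpN hqN hpq
    refine hKs.le_of_add_smul_mem_frontier hN (stereoDir_ne_zero (stereoCoord p))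
      (by linarith [hlt' p hp hpN]) ?_ ?_
    · rwa [north_add_smul_stereoDir_stereoCoord (hlt' p hp hpN).ne]
    · rw [hpq, north_add_smul_stereoDir_stereoCoord (hlt' q hq hqN).ne]
      exact hKc.frontier_subset hq
  intro p hp q hq hpq
  by_cases hpN : p = north <;> by_cases hqN : q = north
  · rw [hpN, hqN]
  · simp [stereoProj, hpN, hqN] at hpq
  · simp [stereoProj, hpN, hqN] at hpq
  · simp only [stereoProj, hpN, hqN, if_false, OnePoint.coe_eq_coe] at hpq
    have h2 : p 2 = q 2 := by linarith [hfar p hp q hq hpN hqN hpq, hfar q hq p hp hqN hpN hpq.symm]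
    rw [← north_add_smul_stereoDir_stereoCoord (hlt' p hp hpN).ne,
      ← north_add_smul_stereoDir_stereoCoord (hlt' q hq hqN).ne, hpq, h2]

theorem surjOn_stereoProj (hK : Convex ℝ K) (hKc : IsCompact K) (hint : (interior K).Nonempty)
    (hNfr : north ∈ frontier K) (hn : ∀ u, IsUnitOuterNormal K north u → u = north) :
    SurjOn stereoProj (frontier K) univ := by
  intro w _
  induction w using OnePoint.rec with
  | infty => exact ⟨north, hNfr, if_pos rfl⟩
  | coe z =>
    obtain ⟨t₀, ht₀, hint₀⟩ := exists_pos_add_smul_mem_interior (v := stereoDir z) hK hint hNfr hn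
      (by rw [inner_north_right, stereoDir_apply_two]; norm_num)
    obtain ⟨t, ht, hfr⟩ := exists_ge_add_smul_mem_frontier hKc (stereoDir_ne_zero z) hint₀
    have htN : north + t • stereoDir z ≠ north := fun h => by
      have := congrArg (· 2) h
      simp only [north_add_smul_stereoDir_apply_two, north_apply_two] at this
      linarith
    refine ⟨_, hfr, ?_⟩
    rw [stereoProj, if_neg htN, stereoCoord_north_add_smul z (by linarith)]

theorem continuousOn_stereoProj (hK : Convex ℝ K) (hKc : IsClosed K)
    (hint : (interior K).Nonempty) (hNfr : north ∈ frontier K)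
    (hn : ∀ u, IsUnitOuterNormal K north u → u = north)
    (hlt : ∀ x ∈ K, x ≠ north → x 2 < 1) : ContinuousOn stereoProj (frontier K) := by
  intro q hq
  rcases eq_or_ne q north with rfl | hqN
  · rw [← continuousWithinAt_sdiff_self, ContinuousWithinAt, stereoProj, if_pos rfl]
    have hcoe : EqOn stereoProj (fun x => (stereoCoord x : OnePoint ℂ)) (frontier K \ {north}) :=
      fun x hx => if_neg hx.2
    refine (tendsto_congr' (eventuallyEq_nhdsWithin_of_eqOn hcoe)).2
      (OnePoint.tendsto_coe_infty.comp ?_)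
    rw [coclosedCompact_eq_cocompact, ← Metric.cobounded_eq_cocompact,
      ← tendsto_norm_atTop_iff_cobounded]
    refine tendsto_norm_stereoCoord_atTop ?_ fun c hc => ?_
    · filter_upwards [self_mem_nhdsWithin] with x hx using hlt x (hKc.frontier_subset hx.1) hx.2
    · filter_upwards [eventually_neg_mul_norm_lt_inner_sub hK hint hNfr hn hc] with x hx
      rw [inner_sub_left, inner_north_right, inner_north_right, north_apply_two] at hx
      linarith
  · have hstereo : stereoProj =ᶠ[𝓝 q] fun x => (stereoCoord x : OnePoint ℂ) := by
      filter_upwards [isOpen_ne.mem_nhds hqN] with x hx using if_neg hx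
    refine ContinuousAt.continuousWithinAt (ContinuousAt.congr ?_ hstereo.symm)
    exact OnePoint.continuous_coe.continuousAt.comp
      (continuousAt_stereoCoord (hlt q (hKc.frontier_subset hq) hqN).ne)

end ConvexBody

/-- Stereographic projection of the boundary of a smooth strictly
convex body `K ⊆ ℝ³` from its north pole `N = (0,0,1)` is a homeomorphism onto the
one-point compactification of `ℂ`. -/
theorem stereographic_projection_isHomeomorph
    (K : Set (EuclideanSpace ℝ (Fin 3)))
    (hKcomp : IsCompact K) (hKconv : Convex ℝ K)
    (hKint : (interior K).Nonempty) (hKstrict : StrictConvex ℝ K)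
    (hsmooth : ∀ p ∈ frontier K,
      ∃! u : EuclideanSpace ℝ (Fin 3), ‖u‖ = 1 ∧ ∀ y ∈ K, ⟪y - p, u⟫ ≤ 0)
    (hKbelow : ∀ x ∈ K, x 2 ≤ (1 : ℝ))
    (hN : K ∩ {x : EuclideanSpace ℝ (Fin 3) | x 2 = 1} =
      {EuclideanSpace.single (2 : Fin 3) (1 : ℝ)})
    (h : frontier K → OnePoint ℂ)
    (h_infty : ∀ p : frontier K,
      (p : EuclideanSpace ℝ (Fin 3)) = EuclideanSpace.single (2 : Fin 3) (1 : ℝ) →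
      h p = OnePoint.infty)
    (h_fin : ∀ p : frontier K,
      (p : EuclideanSpace ℝ (Fin 3)) ≠ EuclideanSpace.single (2 : Fin 3) (1 : ℝ) →
      h p = ((((p : EuclideanSpace ℝ (Fin 3)) 0 : ℂ) +
        ((p : EuclideanSpace ℝ (Fin 3)) 1 : ℂ) * Complex.I) /
        ((1 : ℂ) - ((p : EuclideanSpace ℝ (Fin 3)) 2 : ℂ)) : ℂ)) :
    IsHomeomorph h := by
  have hKclosed := hKcomp.isClosed
  have hNK : north ∈ K := (hN.ge rfl).1
  have hlt : ∀ x ∈ K, x ≠ north → x 2 < 1 := fun x hx hxN =>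
    (hKbelow x hx).lt_of_ne fun hx2 => hxN (hN.le ⟨hx, hx2⟩)
  have hNfr := north_mem_frontier hNK hKbelow
  have hn : ∀ u, IsUnitOuterNormal K north u → u = north := fun u hu =>
    (hsmooth north hNfr).unique hu (isUnitOuterNormal_north hKbelow)
  have h_eq : h = (frontier K).domRestrict stereoProj := funext fun p => by
    by_cases hp : (p : EuclideanSpace ℝ (Fin 3)) = north
    · rw [h_infty p hp, domRestrict_apply, stereoProj, if_pos hp]
    · rw [h_fin p hp, domRestrict_apply, stereoProj, if_neg hp, stereoCoord]
  have : CompactSpace (frontier K) := isCompact_iff_compactSpace.1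
    (hKcomp.of_isClosed_subset isClosed_frontier hKclosed.frontier_subset)
  rw [h_eq, isHomeomorph_iff_continuous_bijective]
  exact ⟨(continuousOn_stereoProj hKconv hKclosed hKint hNfr hn hlt).domRestrict,
    (injOn_stereoProj hKstrict hKclosed hNK hlt).injective,
    surjOn_iff_surjective.1 (surjOn_stereoProj hKconv hKcomp hKint hNfr hn)⟩
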